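/- For every d×d matrix E with tr E = 0 and every δ ∈ (0,1), there exists a vector field u_E ∈ H¹_0(B_{1+δ/2})^d with div u_E = 0 in B_{1+δ/2}, u_E(x) = −Ex for x in the unit ball B, and ‖∇u_E‖_{L²(B_{1+δ/2})} ≤ C(d,δ)·|E|. -/

import Mathlib

/-!
Write `q = |x|²` and `s = x · Ex`. For profiles `a, b` the field `u = b(q) s x - a(q) Ex` has
divergence `(2q b'(q) + (d+2) b(q) - 2a'(q)) s - a(q) tr E`. For a cutoff `θ` equal to `1` for
`q ≤ 1` and to `0` for `q ≥ 1 + δ`, the choice `b = (2/d) θ'`, `a = θ + q b` kills the bracket,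
and `u = -Ex` on `B` while `u = 0` outside `B_{√(1+δ)} ⊂ B_{1+δ/2}`. Since `u` depends linearly
on `E`, Cauchy–Schwarz bounds `‖∇u_E‖²` by `|E|²` times the sum of `‖∇u‖²` over the matrix units.
-/

open MeasureTheory Metric Filter Topology Set Matrix
open scoped ENNReal NNReal

noncomputable section

namespace StokesSuspension

/-- Ambient Euclidean space `ℝ^d`. -/
abbrev V (d : ℕ) := EuclideanSpace ℝ (Fin d)

/-- `d × d` real matrices. -/
abbrev Mat (d : ℕ) := Matrix (Fin d) (Fin d) ℝ

variable {d : ℕ}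

/-- `C^∞` smoothness exponent. -/
def Cinf : WithTop ℕ∞ := (⊤ : ℕ∞)

/-- Reinterpret a plain function `Fin d → ℝ` as a vector of `ℝ^d`. -/
def toV (v : Fin d → ℝ) : V d := WithLp.toLp 2 v

/-- `j`-th coordinate vector. -/
def ebasis (d : ℕ) (j : Fin d) : V d := EuclideanSpace.single j 1

/-- Partial derivative `∂_j u` of a scalar field. -/
def pd (u : V d → ℝ) (x : V d) (j : Fin d) : ℝ := fderiv ℝ u x (ebasis d j)

/-- Second partial derivative `∂_k ∂_j u`. -/
def pd2 (u : V d → ℝ) (x : V d) (j k : Fin d) : ℝ := pd (fun y => pd u y j) x k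

/-- Gradient matrix `(∇u)_{ij} = ∂_j u_i` of a vector field. -/
def gradM (u : V d → V d) (x : V d) : Mat d :=
  Matrix.of fun i j => pd (fun y => u y i) x j

/-- Symmetrized gradient `D(u)`. -/
def symGrad (u : V d → V d) (x : V d) : Mat d :=
  (2:ℝ)⁻¹ • (gradM u x + (gradM u x)ᵀ)

/-- Divergence of a vector field. -/
def divg (u : V d → V d) (x : V d) : ℝ := (gradM u x).trace

/-- Frobenius inner product of matrices `A : B`. -/
def matInner (A B : Mat d) : ℝ := ∑ i, ∑ j, A i j * B i j

/-- Squared Frobenius norm of a matrix. -/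
def mnormSq (A : Mat d) : ℝ := matInner A A

/-- Squared norm `|∇²u|²` of the second gradient of a vector field. -/
def hessSq (u : V d → V d) (x : V d) : ℝ :=
  ∑ i, ∑ j, ∑ k, (pd2 (fun y => u y i) x j k)^2

/-- Squared norm `|∇p|²` of the gradient of a scalar field. -/
def gradSq (p : V d → ℝ) (x : V d) : ℝ := ∑ j, (pd p x j)^2

/-- Symmetric trace-free matrices `𝕄₀^sym`. -/
def IsSymTF (E : Mat d) : Prop := Eᵀ = E ∧ E.trace = 0

/-- Skew-symmetric matrices `𝕄^skew`. -/
def IsSkew (E : Mat d) : Prop := Eᵀ = -E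

/-- Matrix acting on a vector of `ℝ^d`. -/
def mulv (A : Mat d) (x : V d) : V d := toV (A.mulVec fun j => x j)

/-- `u` coincides on `A` with a rigid motion `x ↦ κ + Θ x`, `Θ` skew-symmetric. -/
def IsRigidOn (u : V d → V d) (A : Set (V d)) : Prop :=
  ∃ κ : V d, ∃ Θ : Mat d, IsSkew Θ ∧ ∀ x ∈ A, u x = κ + mulv Θ x

/-- Cauchy stress tensor `σ(u,P) = 2 D(u) − P Id`. -/
def stress (u : V d → V d) (P : V d → ℝ) (x : V d) : Mat d :=
  (2:ℝ) • symGrad u x - P x • (1 : Mat d)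

/-- Vanishing of the net force `∫_{∂B(c,r)} σ(u,P)ν` on the sphere `∂B(c,r)`
(with respect to the `(d−1)`-dimensional Hausdorff surface measure; the
normalization of `ν ∝ x − c` is irrelevant for the vanishing). -/
def ForceFree (u : V d → V d) (P : V d → ℝ) (c : V d) (r : ℝ) : Prop :=
  ∫ x in sphere c r, mulv (stress u P x) (x - c) ∂μH[((d:ℝ) - 1)] = (0 : V d)

/-- Vanishing of the net torque `∫_{∂B(c,r)} Θ(x−c) · σ(u,P)ν` for all skew `Θ`. -/
def TorqueFree (u : V d → V d) (P : V d → ℝ) (c : V d) (r : ℝ) : Prop :=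
  ∀ Θ : Mat d, IsSkew Θ →
    ∫ x in sphere c r,
      (∑ i, mulv Θ (x - c) i * mulv (stress u P x) (x - c) i) ∂μH[((d:ℝ) - 1)] = 0

/-- The random geometric setting: a stationary ergodic point process,
the hardcore condition, on a probability space with an ergodic
measure-preserving action of `(ℝ^d,+)`. -/
structure Setting (d : ℕ) (Ω : Type) [MeasureSpace Ω] where
  /-- the measurable action of the translation group -/
  τ : V d → Ω → Ω
  /-- the random points -/
  xp : ℕ → Ω → V d
  /-- the hardcore parameter -/
  δ : ℝ
  hδ : 0 < δ ∧ δ < 1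
  τ_add : ∀ x y ω, τ x (τ y ω) = τ (x + y) ω
  τ_zero : ∀ ω, τ 0 ω = ω
  τ_measPres : ∀ x, MeasurePreserving (τ x) volume volume
  τ_jointMeas : Measurable fun p : V d × Ω => τ p.1 p.2
  ergodic : ∀ A : Set Ω, MeasurableSet A → (∀ x, τ x ⁻¹' A = A) →
      volume A = 0 ∨ volume A = 1
  xp_meas : ∀ n, Measurable (xp n)
  stat : ∀ y ω, (Set.range fun n => xp n (τ y ω)) = (fun z => y + z) '' Set.range fun n => xp n ω
  hardcore : ∀ᵐ ω ∂volume, ∀ m n : ℕ, m ≠ n → 2 + δ < dist (xp m ω) (xp n ω)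

variable {Ω : Type} [MeasureSpace Ω]

/-- The inclusion set `𝓘^ω = ⋃ₙ B(xₙ^ω)`. -/
def incl (S : Setting d Ω) (ω : Ω) : Set (V d) := ⋃ n, ball (S.xp n ω) 1

/-- Indices `n` with `ε(Iₙ^ω + δB) ⊆ U`. -/
def NsetEps (S : Setting d Ω) (U : Set (V d)) (ε : ℝ) (ω : Ω) : Set ℕ :=
  {n | ∀ y ∈ ball (S.xp n ω) (1 + S.δ), ε • y ∈ U}

/-- Rescaled inclusion set `𝓘_ε^ω(U)`. -/
def inclEps (S : Setting d Ω) (U : Set (V d)) (ε : ℝ) (ω : Ω) : Set (V d) :=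
  ⋃ n ∈ NsetEps S U ε ω, ball (ε • S.xp n ω) ε

/-- The pressure extended by `0` on the inclusions: `Σ · 𝟙_{ℝ^d ∖ 𝓘}`. -/
def pressInd (S : Setting d Ω) (Sp : Ω → V d → ℝ) (ω : Ω) (x : V d) : ℝ :=
  (incl S ω)ᶜ.indicator (Sp ω) x

/-- The corrector `(ψ_E, Σ_E)` for the Stokes corrector equation:
almost sure realization properties (local Sobolev regularity, smoothness off the
inclusions, divergence-free, rigidity `D(ψ_E + Ex) = 0` on the inclusions, the
weak formulation of `−Δψ_E + ∇Σ_E = 0` with no-force and no-torque boundary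
conditions), stationarity of `∇ψ_E` and `Σ_E 𝟙_{ℝ^d∖𝓘}` with vanishing
expectations and finite second moments, and the anchoring `∫_B ψ_E = 0`. -/
structure IsCorrector (S : Setting d Ω) (E : Mat d)
    (ψ : Ω → V d → V d) (Sp : Ω → V d → ℝ) : Prop where
  mem_loc : ∀ᵐ ω ∂volume, ∀ R : ℝ, MemLp (ψ ω) 2 (volume.restrict (ball 0 R)) ∧
      ∀ i j, MemLp (fun x => gradM (ψ ω) x i j) 2 (volume.restrict (ball 0 R))
  mem_press : ∀ᵐ ω ∂volume, ∀ R : ℝ,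
      MemLp (Sp ω) 2 (volume.restrict (ball 0 R \ incl S ω))
  smooth : ∀ᵐ ω ∂volume, ContDiffOn ℝ Cinf (ψ ω) (closure (incl S ω))ᶜ ∧
      ContDiffOn ℝ Cinf (Sp ω) (closure (incl S ω))ᶜ
  div_zero : ∀ᵐ ω ∂volume, ∀ x ∈ (closure (incl S ω))ᶜ, divg (ψ ω) x = 0
  rigid : ∀ᵐ ω ∂volume, ∀ n : ℕ, ∃ κ : V d, ∃ Θ : Mat d, IsSkew Θ ∧
      ∀ x ∈ closedBall (S.xp n ω) 1, ψ ω x + mulv E x = κ + mulv Θ x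
  eqn : ∀ᵐ ω ∂volume, ∀ φ : V d → V d, ContDiff ℝ Cinf φ → HasCompactSupport φ →
      (∀ x ∈ incl S ω, symGrad φ x = 0) →
      (∫ x, matInner (gradM (ψ ω) x) (gradM φ x))
        - (∫ x in (incl S ω)ᶜ, Sp ω x * divg φ x) = 0
  force : ∀ᵐ ω ∂volume, ∀ n : ℕ,
      ForceFree (fun x => ψ ω x + mulv E x) (Sp ω) (S.xp n ω) 1
  torque : ∀ᵐ ω ∂volume, ∀ n : ℕ,
      TorqueFree (fun x => ψ ω x + mulv E x) (Sp ω) (S.xp n ω) 1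
  stat_grad : ∀ (x y : V d) (ω : Ω), gradM (ψ ω) (x + y) = gradM (ψ (S.τ (-y) ω)) x
  stat_press : ∀ (x y : V d) (ω : Ω), pressInd S Sp ω (x + y) = pressInd S Sp (S.τ (-y) ω) x
  mean_grad : ∀ i j, ∫ ω, gradM (ψ ω) 0 i j ∂volume = 0
  mean_press : ∫ ω, pressInd S Sp ω 0 ∂volume = 0
  sq_int : Integrable (fun ω => mnormSq (gradM (ψ ω) 0)) volume ∧
      Integrable (fun ω => (pressInd S Sp ω 0)^2) volume
  anchor : ∀ᵐ ω ∂volume, ∫ x in ball (0:V d) 1, ψ ω x = (0 : V d)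

/-- `(u_ε^ω, P_ε^ω)` is a weak solution of the suspension Stokes problem in `U`:
`u ∈ H¹₀(U)^d` (extended by zero), divergence-free, rigid on each inclusion,
pressure in `L²(U∖𝓘_ε(U))` with zero average, and the weak formulation of the
system (which encodes `−Δu + ∇P = f` in the fluid domain together with the
no-force and no-torque balances on each particle) tested against smooth fields
that are rigid on the inclusions. -/
structure IsSuspSol (S : Setting d Ω) (U : Set (V d)) (f : V d → V d)
    (ε : ℝ) (ω : Ω) (u : V d → V d) (P : V d → ℝ) : Prop where
  mem_u : MemLp u 2 (volume.restrict U)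
  mem_grad : ∀ i j, MemLp (fun x => gradM u x i j) 2 (volume.restrict U)
  zero_out : ∀ x ∉ U, u x = 0
  smooth_fluid : ContDiffOn ℝ Cinf u (U \ closure (inclEps S U ε ω))
  div_zero : ∀ x ∈ U \ closure (inclEps S U ε ω), divg u x = 0
  rigid : ∀ n ∈ NsetEps S U ε ω, IsRigidOn u (ball (ε • S.xp n ω) ε)
  mem_P : MemLp P 2 (volume.restrict (U \ inclEps S U ε ω))
  P_avg : ∫ x in U \ inclEps S U ε ω, P x = 0
  weak_form : ∀ φ : V d → V d, ContDiff ℝ Cinf φ → HasCompactSupport φ → tsupport φ ⊆ U →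
      (∀ x ∈ inclEps S U ε ω, symGrad φ x = 0) →
      (∫ x in U, matInner (gradM u x) (gradM φ x))
        - (∫ x in U \ inclEps S U ε ω, P x * divg φ x)
        = ∫ x in U \ inclEps S U ε ω, ∑ i, f x i * φ x i

/-- `B̄` is the effective viscosity associated with the correctors `ψ`:
a symmetric linear map with `E : B̄E = 𝔼[|D(ψ_E) + E|²]` on `𝕄₀^sym`. -/
def IsEffVisc (S : Setting d Ω) (ψ : Mat d → Ω → V d → V d)
    (Bbar : Mat d → Mat d) : Prop :=
  IsLinearMap ℝ Bbar ∧ (∀ E E' : Mat d, matInner E' (Bbar E) = matInner E (Bbar E')) ∧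
  ∀ E : Mat d, IsSymTF E →
    matInner E (Bbar E) = ∫ ω, mnormSq (symGrad (ψ E ω) 0 + E) ∂(volume : Measure Ω)

/-- The boundary integral `∫_{∂Iₙ^ω} (x−xₙ)·σ(ψ_E + Ex, Σ_E)ν`. -/
def bdryMoment (S : Setting d Ω) (E : Mat d) (ψ : V d → V d) (Sp : V d → ℝ)
    (ω : Ω) (n : ℕ) : ℝ :=
  ∫ x in sphere (S.xp n ω) 1,
    ∑ i, (x i - S.xp n ω i) *
      mulv (stress (fun y => ψ y + mulv E y) Sp x) (x - S.xp n ω) i ∂μH[((d:ℝ) - 1)]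

/-- `b̄ ∈ 𝕄₀^sym` with `b̄ : E = (1/d) 𝔼[Σₙ (𝟙_{Iₙ}/|Iₙ|) ∫_{∂Iₙ} (x−xₙ)·σ(ψ_E+Ex,Σ_E)ν]`. -/
def IsEffb (S : Setting d Ω) (ψ : Mat d → Ω → V d → V d)
    (Sp : Mat d → Ω → V d → ℝ) (bbar : Mat d) : Prop :=
  IsSymTF bbar ∧ ∀ E : Mat d, IsSymTF E →
    matInner bbar E = (d:ℝ)⁻¹ *
      ∫ ω, (∑' n : ℕ, (ball (S.xp n ω) 1).indicator
        (fun _ => (volume (ball (0:V d) 1)).toReal⁻¹ * bdryMoment S E (ψ E ω) (Sp E ω) ω n)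
        (0:V d)) ∂(volume : Measure Ω)

/-- `(ū, P̄)` is a weak solution of the homogenized Stokes problem
`−div(2 B̄ D(ū)) + ∇P̄ = (1−λ) f`, `div ū = 0` in `U`, `ū ∈ H¹₀(U)^d`, `∫_U P̄ = 0`. -/
structure IsHomSol (U : Set (V d)) (f : V d → V d) (Bbar : Mat d → Mat d)
    (lam : ℝ) (ub : V d → V d) (Pb : V d → ℝ) : Prop where
  mem_u : MemLp ub 2 (volume.restrict U)
  mem_grad : ∀ i j, MemLp (fun x => gradM ub x i j) 2 (volume.restrict U)
  zero_out : ∀ x ∉ U, ub x = 0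
  div_zero : ∀ᵐ x ∂(volume.restrict U), divg ub x = 0
  mem_P : MemLp Pb 2 (volume.restrict U)
  P_avg : ∫ x in U, Pb x = 0
  weak_form : ∀ φ : V d → V d, ContDiff ℝ Cinf φ → HasCompactSupport φ → tsupport φ ⊆ U →
      (∫ x in U, matInner ((2:ℝ) • Bbar (symGrad ub x)) (symGrad φ x))
        - (∫ x in U, Pb x * divg φ x)
        = (1 - lam) * ∫ x in U, ∑ i, f x i * φ x i

/-- Weak convergence to `0` in `L²(A)` as `ε ↓ 0` of a family of scalar functions. -/
def WeakL2Zero (A : Set (V d)) (F : ℝ → V d → ℝ) : Prop :=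
  ∀ g : V d → ℝ, MemLp g 2 (volume.restrict A) →
    Tendsto (fun ε => ∫ x in A, F ε x * g x) (𝓝[>] (0:ℝ)) (𝓝 (0:ℝ))

lemma natCast_le_Cinf (n : ℕ) : (n : WithTop ℕ∞) ≤ Cinf := by
  rw [Cinf]; exact_mod_cast le_top

lemma mnormSq_eq_sum_sq (A : Mat d) : mnormSq A = ∑ p : Fin d × Fin d, A p.1 p.2 ^ 2 := by
  simp only [mnormSq, matInner, Fintype.sum_prod_type, sq]

lemma mnormSq_nonneg (A : Mat d) : 0 ≤ mnormSq A := by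
  rw [mnormSq_eq_sum_sq]; positivity

lemma mulv_eq_toEuclideanCLM (E : Mat d) : mulv E = Matrix.toEuclideanCLM (𝕜 := ℝ) E := rfl

lemma hasFDerivAt_mulv (E : Mat d) (x : V d) :
    HasFDerivAt (mulv E) (Matrix.toEuclideanCLM (𝕜 := ℝ) E) x :=
  (Matrix.toEuclideanCLM (𝕜 := ℝ) E).hasFDerivAt

lemma mulv_apply (E : Mat d) (x : V d) (i : Fin d) : mulv E x i = ∑ k, E i k * x k := by
  simp [mulv, toV, Matrix.mulVec, dotProduct]

section FieldCalculus

variable {u v : V d → V d} {x : V d}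

lemma gradM_apply (hu : DifferentiableAt ℝ u x) (i j : Fin d) :
    gradM u x i j = fderiv ℝ u x (ebasis d j) i := by
  have h := ((EuclideanSpace.proj i : V d →L[ℝ] ℝ).hasFDerivAt.comp x hu.hasFDerivAt).fderiv
  simp only [gradM, pd, Matrix.of_apply]
  exact congrArg (· (ebasis d j)) h

lemma divg_eq_sum (hu : DifferentiableAt ℝ u x) :
    divg u x = ∑ i, fderiv ℝ u x (ebasis d i) i := by
  simp only [divg, Matrix.trace, Matrix.diag, gradM_apply hu]

lemma gradM_mulv (E : Mat d) : gradM (mulv E) x = E := by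
  ext i j
  rw [gradM_apply (hasFDerivAt_mulv E x).differentiableAt, (hasFDerivAt_mulv E x).fderiv,
    ← mulv_eq_toEuclideanCLM, mulv_apply]
  simp [ebasis]

lemma divg_mulv (E : Mat d) : divg (mulv E) x = E.trace := by
  rw [divg, gradM_mulv]

lemma divg_id : divg (fun y : V d => y) x = d := by
  have h : (fun y : V d => y) = mulv 1 := by
    funext y; ext i; simp [mulv_apply, Matrix.one_apply]
  rw [h, divg_mulv, Matrix.trace_one, Fintype.card_fin]

lemma divg_sub (hu : DifferentiableAt ℝ u x) (hv : DifferentiableAt ℝ v x) :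
    divg (fun y => u y - v y) x = divg u x - divg v x := by
  rw [divg_eq_sum (hu.fun_sub hv), divg_eq_sum hu, divg_eq_sum hv, fderiv_fun_sub hu hv,
    ← Finset.sum_sub_distrib]
  rfl

lemma divg_smul {g : V d → ℝ} (hg : DifferentiableAt ℝ g x) (hv : DifferentiableAt ℝ v x) :
    divg (fun y => g y • v y) x = g x * divg v x + fderiv ℝ g x (v x) := by
  have hexp : v x = ∑ i, v x i • ebasis d i := by
    simpa [ebasis] using ((EuclideanSpace.basisFun (Fin d) ℝ).sum_repr (v x)).symm
  rw [divg_eq_sum (hg.fun_smul hv), divg_eq_sum hv, fderiv_fun_smul hg hv]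
  conv_rhs => rw [hexp]
  simp [Finset.mul_sum, ← Finset.sum_add_distrib, mul_comm]

lemma gradM_sum_smul {ι : Type*} (s : Finset ι) (c : ι → ℝ) {w : ι → V d → V d} {x : V d}
    (hw : ∀ m ∈ s, DifferentiableAt ℝ (w m) x) :
    gradM (fun y => ∑ m ∈ s, c m • w m y) x = ∑ m ∈ s, c m • gradM (w m) x := by
  have hsum : DifferentiableAt ℝ (fun y => ∑ m ∈ s, c m • w m y) x :=
    DifferentiableAt.fun_sum fun m hm => (hw m hm).const_smul (c m)
  ext i j
  rw [gradM_apply hsum,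
    fderiv_fun_sum (A := fun m y => c m • w m y) fun m hm => (hw m hm).const_smul (c m)]
  simp only [_root_.sum_apply, WithLp.ofLp_sum, Finset.sum_apply, Matrix.sum_apply]
  refine Finset.sum_congr rfl fun m hm => ?_
  rw [fderiv_fun_const_smul (hw m hm), Matrix.smul_apply, gradM_apply (hw m hm)]
  rfl

end FieldCalculus

lemma mnormSq_sum_smul_le {ι : Type*} (s : Finset ι) (c : ι → ℝ) (A : ι → Mat d) :
    mnormSq (∑ m ∈ s, c m • A m) ≤ (∑ m ∈ s, c m ^ 2) * ∑ m ∈ s, mnormSq (A m) := by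
  simp only [mnormSq_eq_sum_sq, Matrix.sum_apply, Matrix.smul_apply, smul_eq_mul]
  calc ∑ p : Fin d × Fin d, (∑ m ∈ s, c m * A m p.1 p.2) ^ 2
      ≤ ∑ p : Fin d × Fin d, (∑ m ∈ s, c m ^ 2) * ∑ m ∈ s, A m p.1 p.2 ^ 2 :=
        Finset.sum_le_sum fun p _ => Finset.sum_mul_sq_le_sq_mul_sq s c fun m => A m p.1 p.2
    _ = (∑ m ∈ s, c m ^ 2) * ∑ m ∈ s, ∑ p : Fin d × Fin d, A m p.1 p.2 ^ 2 := by
        rw [← Finset.mul_sum, Finset.sum_comm]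

section CompactlySupported

variable {u : V d → V d}

lemma continuous_gradM_apply (hu : ContDiff ℝ 1 u) (i j : Fin d) :
    Continuous fun x => gradM u x i j :=
  ((contDiff_euclidean.mp hu i).continuous_fderiv one_ne_zero).clm_apply continuous_const

lemma hasCompactSupport_gradM_apply (hus : HasCompactSupport u) (i j : Fin d) :
    HasCompactSupport fun x => gradM u x i j :=
  (hus.comp_left (g := fun v : V d => v i) rfl).fderiv_apply ℝ (ebasis d j)

lemma memLp_gradM_apply (hu : ContDiff ℝ 1 u) (hus : HasCompactSupport u) (p : ℝ≥0∞) (i j : Fin d) :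
    MemLp (fun x => gradM u x i j) p :=
  (continuous_gradM_apply hu i j).memLp_of_hasCompactSupport
    (hasCompactSupport_gradM_apply hus i j)

lemma integral_mul_pd_eq_neg (hu : ContDiff ℝ 1 u) (hus : HasCompactSupport u) {χ : V d → ℝ}
    (hχ : ContDiff ℝ 1 χ) (i j : Fin d) :
    ∫ x, u x i * pd χ x j = -∫ x, gradM u x i j * χ x := by
  have hui : ContDiff ℝ 1 fun x => u x i := contDiff_euclidean.mp hu i
  have huis : HasCompactSupport fun x => u x i := hus.comp_left (g := fun v : V d => v i) rfl
  have hpd : Continuous fun x => pd χ x j :=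
    (hχ.continuous_fderiv one_ne_zero).clm_apply continuous_const
  exact integral_mul_fderiv_eq_neg_fderiv_mul_of_integrable
    (((continuous_gradM_apply hu i j).mul hχ.continuous).integrable_of_hasCompactSupport
      (hasCompactSupport_gradM_apply hus i j).mul_right)
    ((hui.continuous.mul hpd).integrable_of_hasCompactSupport huis.mul_right)
    ((hui.continuous.mul hχ.continuous).integrable_of_hasCompactSupport huis.mul_right)
    (fun x _ => (hui.differentiable one_ne_zero).differentiableAt)
    (fun x _ => (hχ.differentiable one_ne_zero).differentiableAt)

lemma integrable_mnormSq_gradM (hu : ContDiff ℝ 1 u) (hus : HasCompactSupport u) :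
    Integrable fun x => mnormSq (gradM u x) := by
  unfold mnormSq matInner
  refine integrable_finsetSum _ fun i _ => integrable_finsetSum _ fun j _ => ?_
  exact ((continuous_gradM_apply hu i j).mul (continuous_gradM_apply hu i j))
    |>.integrable_of_hasCompactSupport (hasCompactSupport_gradM_apply hus i j).mul_right

end CompactlySupported

lemma apply_eq_sum_smul_single {F : Type*} [AddCommMonoid F] [Module ℝ F] {f : Mat d → F}
    (hf : IsLinearMap ℝ f) (E : Mat d) :
    f E = ∑ p : Fin d × Fin d, E p.1 p.2 • f (Matrix.single p.1 p.2 1) := by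
  have hE : E = ∑ p : Fin d × Fin d, E p.1 p.2 • Matrix.single p.1 p.2 (1 : ℝ) := by
    conv_lhs => rw [Matrix.matrix_eq_sum_single E]
    simp [Fintype.sum_prod_type, Matrix.smul_single]
  calc f E = hf.mk' f (∑ p : Fin d × Fin d, E p.1 p.2 • Matrix.single p.1 p.2 (1 : ℝ)) := by
        rw [← hE]; rfl
    _ = _ := by simp only [map_sum, map_smul, IsLinearMap.mk'_apply]

lemma exists_integral_mnormSq_gradM_le {u : Mat d → V d → V d}
    (hlin : ∀ x, IsLinearMap ℝ fun E => u E x) (hu : ∀ E, ContDiff ℝ 1 (u E))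
    (hus : ∀ E, HasCompactSupport (u E)) (S : Set (V d)) :
    ∃ C, 0 < C ∧ ∀ E, ∫ x in S, mnormSq (gradM (u E) x) ≤ C * mnormSq E := by
  set e : Fin d × Fin d → Mat d := fun p => Matrix.single p.1 p.2 1
  set K := ∑ p, ∫ x in S, mnormSq (gradM (u (e p)) x)
  have hK : 0 ≤ K := Finset.sum_nonneg fun p _ =>
    setIntegral_nonneg_of_ae (Eventually.of_forall fun x => mnormSq_nonneg _)
  refine ⟨K + 1, by positivity, fun E => ?_⟩
  have hpoint : ∀ x, mnormSq (gradM (u E) x) ≤ mnormSq E * ∑ p, mnormSq (gradM (u (e p)) x) := by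
    intro x
    have hsum : u E = fun y => ∑ p, E p.1 p.2 • u (e p) y :=
      funext fun y => apply_eq_sum_smul_single (hlin y) E
    rw [hsum, mnormSq_eq_sum_sq E,
      gradM_sum_smul _ _ fun p _ => ((hu (e p)).differentiable one_ne_zero).differentiableAt]
    exact mnormSq_sum_smul_le _ _ _
  calc ∫ x in S, mnormSq (gradM (u E) x)
      ≤ ∫ x in S, mnormSq E * ∑ p, mnormSq (gradM (u (e p)) x) :=
        setIntegral_mono (integrable_mnormSq_gradM (hu E) (hus E)).integrableOn
          ((integrable_finsetSum _ fun p _ =>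
            integrable_mnormSq_gradM (hu (e p)) (hus (e p))).const_mul _).integrableOn hpoint
    _ = mnormSq E * K := by
        rw [integral_const_mul, integral_finsetSum _ fun p _ =>
          (integrable_mnormSq_gradM (hu (e p)) (hus (e p))).integrableOn]
    _ ≤ (K + 1) * mnormSq E := by nlinarith [mnormSq_nonneg E]

section RadialField

variable (a b : ℝ → ℝ) (E : Mat d)

def radialField (x : V d) : V d :=
  (b (‖x‖ ^ 2) * inner ℝ x (mulv E x)) • x - a (‖x‖ ^ 2) • mulv E x

lemma isLinearMap_radialField (x : V d) : IsLinearMap ℝ fun E : Mat d => radialField a b E x where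
  map_add E F := by
    simp only [radialField, mulv_eq_toEuclideanCLM, map_add, _root_.add_apply, inner_add_right]
    module
  map_smul c E := by
    simp only [radialField, mulv_eq_toEuclideanCLM, map_smul, _root_.smul_apply, inner_smul_right]
    module

lemma contDiff_radialField {n : WithTop ℕ∞} (ha : ContDiff ℝ n a) (hb : ContDiff ℝ n b) :
    ContDiff ℝ n (radialField a b E) := by
  have hq : ContDiff ℝ n fun x : V d => ‖x‖ ^ 2 := contDiff_norm_sq ℝ
  have hL : ContDiff ℝ n (mulv E) := (Matrix.toEuclideanCLM (𝕜 := ℝ) E).contDiff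
  exact (((hb.comp hq).mul (contDiff_id.inner ℝ hL)).smul contDiff_id).sub ((ha.comp hq).smul hL)

lemma radialField_of_eq_one_of_eq_zero {x : V d} (ha : a (‖x‖ ^ 2) = 1) (hb : b (‖x‖ ^ 2) = 0) :
    radialField a b E x = -mulv E x := by
  simp [radialField, ha, hb]

lemma radialField_of_eq_zero {x : V d} (ha : a (‖x‖ ^ 2) = 0) (hb : b (‖x‖ ^ 2) = 0) :
    radialField a b E x = 0 := by
  simp [radialField, ha, hb]

lemma divg_radialField {x : V d} (ha : DifferentiableAt ℝ a (‖x‖ ^ 2))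
    (hb : DifferentiableAt ℝ b (‖x‖ ^ 2)) :
    divg (radialField a b E) x =
      (2 * ‖x‖ ^ 2 * deriv b (‖x‖ ^ 2) + (d + 2) * b (‖x‖ ^ 2) - 2 * deriv a (‖x‖ ^ 2))
        * inner ℝ x (mulv E x) - a (‖x‖ ^ 2) * E.trace := by
  have hq : HasFDerivAt (fun y : V d => ‖y‖ ^ 2) (2 • innerSL ℝ x) x :=
    (hasStrictFDerivAt_norm_sq x).hasFDerivAt
  have hA : HasFDerivAt (fun y : V d => a (‖y‖ ^ 2)) _ x :=
    ha.hasDerivAt.comp_hasFDerivAt x hq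
  have hs : HasFDerivAt (fun y : V d => inner ℝ y (mulv E y)) _ x :=
    (hasFDerivAt_id x).inner ℝ (hasFDerivAt_mulv E x)
  have hg : HasFDerivAt (fun y : V d => b (‖y‖ ^ 2) * inner ℝ y (mulv E y)) _ x :=
    (hb.hasDerivAt.comp_hasFDerivAt x hq).mul hs
  have hu : DifferentiableAt ℝ (fun y : V d => (b (‖y‖ ^ 2) * inner ℝ y (mulv E y)) • y) x :=
    hg.differentiableAt.smul differentiableAt_id
  have hv : DifferentiableAt ℝ (fun y : V d => a (‖y‖ ^ 2) • mulv E y) x :=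
    hA.differentiableAt.smul (hasFDerivAt_mulv E x).differentiableAt
  unfold radialField
  rw [divg_sub hu hv, divg_smul (v := fun y => y) hg.differentiableAt differentiableAt_id,
    divg_smul hA.differentiableAt (hasFDerivAt_mulv E x).differentiableAt,
    hg.fderiv, hA.fderiv, divg_id, divg_mulv]
  simp only [Function.comp_apply, id_eq, _root_.add_apply, _root_.smul_apply,
    ContinuousLinearMap.comp_apply, ContinuousLinearMap.prod_apply, ContinuousLinearMap.id_apply,
    fderivInnerCLM_apply, smul_eq_mul, coe_innerSL_apply, inner_self_eq_norm_sq_to_K,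
    Real.ringHom_apply, nsmul_eq_mul, Nat.cast_ofNat]
  rw [← mulv_eq_toEuclideanCLM]
  ring

end RadialField

section Profile

variable (d) (θ : ℝ → ℝ)

def profileB (r : ℝ) : ℝ := 2 / d * deriv θ r

def profileA (r : ℝ) : ℝ := θ r + r * profileB d θ r

variable {d θ}

lemma contDiff_profileB {n : WithTop ℕ∞} (hθ : ContDiff ℝ (n + 1) θ) :
    ContDiff ℝ n (profileB d θ) :=
  contDiff_const.mul hθ.deriv'

lemma contDiff_profileA {n : WithTop ℕ∞} (hθ : ContDiff ℝ (n + 1) θ) :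
    ContDiff ℝ n (profileA d θ) :=
  (hθ.of_le le_self_add).add (contDiff_id.mul (contDiff_profileB hθ))

lemma profile_divergence_identity (hd : (d : ℝ) ≠ 0) (hθ : ContDiff ℝ 2 θ) (r : ℝ) :
    2 * r * deriv (profileB d θ) r + (d + 2) * profileB d θ r - 2 * deriv (profileA d θ) r = 0 := by
  have hθ' : HasDerivAt θ (deriv θ r) r :=
    ((hθ.differentiable two_ne_zero) r).hasDerivAt
  have hθ'' : HasDerivAt (deriv θ) (deriv (deriv θ) r) r :=
    ((hθ.deriv' (n := 1)).differentiable one_ne_zero r).hasDerivAt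
  have hB : HasDerivAt (profileB d θ) (2 / d * deriv (deriv θ) r) r := hθ''.const_mul _
  have hA : HasDerivAt (profileA d θ)
      (deriv θ r + (1 * profileB d θ r + r * (2 / d * deriv (deriv θ) r))) r :=
    hθ'.add ((hasDerivAt_id r).mul hB)
  rw [hA.deriv, hB.deriv, profileB]
  field_simp
  ring

lemma profileA_eq_of_eventuallyEq {r c : ℝ} (h : θ =ᶠ[𝓝 r] fun _ => c) : profileA d θ r = c := by
  simp [profileA, profileB, h.eq_of_nhds, h.deriv_eq]

lemma profileB_eq_zero_of_eventuallyEq {r c : ℝ} (h : θ =ᶠ[𝓝 r] fun _ => c) :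
    profileB d θ r = 0 := by
  simp [profileB, h.deriv_eq]

end Profile

-- For `tr E = 0` this is `u_i = ∂_j (θ(|x|²) Φ_ij)`, with the antisymmetric potential
-- `Φ_ij = ((Ex)_j x_i - (Ex)_i x_j) / d` of `-Ex`.
def solenoidalExtension (θ : ℝ → ℝ) (E : Mat d) : V d → V d :=
  radialField (profileA d θ) (profileB d θ) E

section SolenoidalExtension

variable {θ : ℝ → ℝ}

lemma divg_solenoidalExtension (hd : (d : ℝ) ≠ 0) (hθ : ContDiff ℝ 2 θ) {E : Mat d}
    (hE : E.trace = 0) (x : V d) : divg (solenoidalExtension θ E) x = 0 := by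
  rw [solenoidalExtension, divg_radialField _ _ _
      ((contDiff_profileA (n := 1) hθ).differentiable one_ne_zero _)
      ((contDiff_profileB (n := 1) hθ).differentiable one_ne_zero _),
    profile_divergence_identity hd hθ, hE]
  ring

lemma contDiff_solenoidalExtension {n : WithTop ℕ∞} (hθ : ContDiff ℝ (n + 1) θ) (E : Mat d) :
    ContDiff ℝ n (solenoidalExtension θ E) :=
  contDiff_radialField _ _ E (contDiff_profileA hθ) (contDiff_profileB hθ)

lemma solenoidalExtension_of_eventuallyEq_one {E : Mat d} {x : V d}
    (h : θ =ᶠ[𝓝 (‖x‖ ^ 2)] 1) : solenoidalExtension θ E x = -mulv E x :=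
  radialField_of_eq_one_of_eq_zero _ _ E (profileA_eq_of_eventuallyEq h)
    (profileB_eq_zero_of_eventuallyEq h)

lemma solenoidalExtension_of_eventuallyEq_zero {E : Mat d} {x : V d}
    (h : θ =ᶠ[𝓝 (‖x‖ ^ 2)] 0) : solenoidalExtension θ E x = 0 :=
  radialField_of_eq_zero _ _ E (profileA_eq_of_eventuallyEq h)
    (profileB_eq_zero_of_eventuallyEq h)

end SolenoidalExtension

lemma exists_cutoff_of_norm_sq {F : Type*} [NormedAddCommGroup F] {δ : ℝ} (hδ : 0 < δ) :
    ∃ θ : ℝ → ℝ, ContDiff ℝ Cinf θ ∧ (∀ x ∈ ball (0 : F) 1, θ =ᶠ[𝓝 (‖x‖ ^ 2)] 1) ∧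
      ∀ x ∉ ball (0 : F) (1 + δ / 2), θ =ᶠ[𝓝 (‖x‖ ^ 2)] 0 := by
  let θ : ContDiffBump (0 : ℝ) := ⟨1, 1 + δ, one_pos, by linarith⟩
  refine ⟨θ, θ.contDiff, fun x hx => θ.eventuallyEq_one_of_mem_ball ?_,
    fun x hx => notMem_tsupport_iff_eventuallyEq.mp ?_⟩
  · rw [mem_ball_zero_iff] at hx
    rw [mem_ball_zero_iff, Real.norm_eq_abs, abs_of_nonneg (by positivity)]
    show ‖x‖ ^ 2 < 1
    nlinarith [norm_nonneg x]
  · rw [mem_ball_zero_iff, not_lt] at hx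
    rw [θ.tsupport_eq, mem_closedBall_zero_iff, Real.norm_eq_abs, abs_of_nonneg (by positivity),
      not_le]
    show 1 + δ < ‖x‖ ^ 2
    nlinarith

/-- For every trace-free `d×d` matrix `E` and every `δ ∈ (0,1)`,
there is a divergence-free vector field `u_E ∈ H¹₀(B_{1+δ/2})^d` equal to `−Ex`
on the unit ball `B`, with `‖∇u_E‖_{L²(B_{1+δ/2})} ≤ C(d,δ) |E|`. -/
theorem stmt8
    {d : ℕ} (hd : 2 ≤ d) (δ : ℝ) (hδ : 0 < δ ∧ δ < 1) :
    ∃ C : ℝ, 0 < C ∧ ∀ E : Mat d, E.trace = 0 →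
      ∃ u : V d → V d,
        (∀ x ∉ ball (0:V d) (1 + δ/2), u x = 0) ∧
        (∀ x ∈ ball (0:V d) 1, u x = -(mulv E x)) ∧
        MemLp u 2 (volume.restrict (ball (0:V d) (1 + δ/2))) ∧
        (∀ i j, MemLp (fun x => gradM u x i j) 2
            (volume.restrict (ball (0:V d) (1 + δ/2)))) ∧
        (∀ χ : V d → ℝ, ContDiff ℝ Cinf χ → HasCompactSupport χ →
          ∀ i j, (∫ x, u x i * pd χ x j) = - ∫ x, gradM u x i j * χ x) ∧
        (∀ᵐ x ∂(volume : Measure (V d)), x ∈ ball (0:V d) (1 + δ/2) → divg u x = 0) ∧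
        (∫ x in ball (0:V d) (1 + δ/2), mnormSq (gradM u x)) ≤ C * mnormSq E := by
  have hd0 : (d : ℝ) ≠ 0 := by exact_mod_cast (by omega : d ≠ 0)
  obtain ⟨θ, hθ, hθ_one, hθ_zero⟩ := exists_cutoff_of_norm_sq (F := V d) hδ.1
  have hθ2 : ContDiff ℝ 2 θ := hθ.of_le (natCast_le_Cinf 2)
  have hu : ∀ E : Mat d, ContDiff ℝ 1 (solenoidalExtension θ E) :=
    contDiff_solenoidalExtension (n := 1) hθ2
  have hzero : ∀ (E : Mat d), ∀ x ∉ ball (0 : V d) (1 + δ / 2), solenoidalExtension θ E x = 0 :=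
    fun E x hx => solenoidalExtension_of_eventuallyEq_zero (hθ_zero x hx)
  have hus : ∀ E : Mat d, HasCompactSupport (solenoidalExtension θ E) := fun E =>
    HasCompactSupport.intro (isCompact_closedBall 0 (1 + δ / 2))
      fun x hx => hzero E x fun h => hx (ball_subset_closedBall h)
  obtain ⟨C, hC, hbound⟩ := exists_integral_mnormSq_gradM_le
    (isLinearMap_radialField _ _) hu hus (ball (0 : V d) (1 + δ / 2))
  refine ⟨C, hC, fun E hE => ⟨solenoidalExtension θ E, hzero E,
    fun x hx => solenoidalExtension_of_eventuallyEq_one (hθ_one x hx),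
    ((hu E).continuous.memLp_of_hasCompactSupport (hus E)).restrict _,
    fun i j => (memLp_gradM_apply (hu E) (hus E) 2 i j).restrict _,
    fun χ hχ _ i j => integral_mul_pd_eq_neg (hu E) (hus E) (hχ.of_le (natCast_le_Cinf 1)) i j,
    Eventually.of_forall fun x _ => divg_solenoidalExtension hd0 hθ2 hE x, hbound E⟩⟩

end StokesSuspension
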